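/- Let (s₀,i₀) ∈ B with i₀ > 0 and let u be an optimal control for the infinite-horizon problem P^∞_{λ₁,λ₂} with λ₁ > 0. Then s^u_∞ := lim_{t→∞} s^u(t) < γ/β; that is, herd immunity is reached in finite time along the optimal trajectory. -/

import Mathlib

open MeasureTheory Filter Set intervalIntegral
open scoped ENNReal

noncomputable section

/-- A control: a measurable (essentially bounded) function with values in `[0, umax]`. -/
def IsControl (umax : ℝ) (u : ℝ → ℝ) : Prop :=
  Measurable u ∧ ∀ t : ℝ, u t ∈ Set.Icc (0 : ℝ) umax

/-- Solution of the controlled SIR system on `[0,∞)`, in integral (i.e. locally absolutely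
continuous) form: `s' = -(β-u)·s·i`, `i' = (β-u)·s·i - γ·i` a.e., `s 0 = s₀`, `i 0 = i₀`. -/
def SIRSol (β γ : ℝ) (u s i : ℝ → ℝ) (s₀ i₀ : ℝ) : Prop :=
  Continuous s ∧ Continuous i ∧
  (∀ t : ℝ, 0 ≤ t → s t = s₀ + ∫ τ in (0:ℝ)..t, -((β - u τ) * s τ * i τ)) ∧
  (∀ t : ℝ, 0 ≤ t → i t = i₀ + ∫ τ in (0:ℝ)..t, ((β - u τ) * s τ * i τ - γ * i τ))

/-- Solution of the controlled SIR system on `[0,T]`, in integral form. -/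
def SIRSolOn (β γ T : ℝ) (u s i : ℝ → ℝ) (s₀ i₀ : ℝ) : Prop :=
  ContinuousOn s (Set.Icc 0 T) ∧ ContinuousOn i (Set.Icc 0 T) ∧
  (∀ t ∈ Set.Icc (0:ℝ) T, s t = s₀ + ∫ τ in (0:ℝ)..t, -((β - u τ) * s τ * i τ)) ∧
  (∀ t ∈ Set.Icc (0:ℝ) T, i t = i₀ + ∫ τ in (0:ℝ)..t, ((β - u τ) * s τ * i τ - γ * i τ))

/-- The triangle `T = {(s,i) ∈ (0,1]² : s + i ≤ 1}`. -/
def Triangle : Set (ℝ × ℝ) :=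
  {p | 0 < p.1 ∧ p.1 ≤ 1 ∧ 0 < p.2 ∧ p.2 ≤ 1 ∧ p.1 + p.2 ≤ 1}

/-- The curve `Φ_max`. -/
def PhiMax (β γ umax iM : ℝ) (x : ℝ) : ℝ :=
  if x < γ / (β - umax) then iM
  else γ / (β - umax) + iM - x + (γ / (β - umax)) * (Real.log x - Real.log (γ / (β - umax)))

/-- The curve `Φ₀`. -/
def Phi0 (β γ iM : ℝ) (x : ℝ) : ℝ :=
  if x < γ / β then iM
  else γ / β + iM - x + (γ / β) * (Real.log x - Real.log (γ / β))

/-- The ICU (state) constraint `i(t) ≤ i_M` for all `t ≥ 0`. -/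
def Admissible (iM : ℝ) (i : ℝ → ℝ) : Prop := ∀ t : ℝ, 0 ≤ t → i t ≤ iM

/-- Infinite-horizon cost `J^∞(u) = ∫₀^∞ (λ₁ u + λ₂ i) dt`, with values in `[0,∞]`. -/
def Cost (l1 l2 : ℝ) (u i : ℝ → ℝ) : ℝ≥0∞ :=
  ∫⁻ t in Set.Ioi (0:ℝ), ENNReal.ofReal (l1 * u t + l2 * i t)

/-- Finite-horizon cost `J^T(u) = ∫₀^T (λ₁ u + λ₂ i) dt`. -/
def CostT (l1 l2 T : ℝ) (u i : ℝ → ℝ) : ℝ≥0∞ :=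
  ∫⁻ t in Set.Ioc (0:ℝ) T, ENNReal.ofReal (l1 * u t + l2 * i t)

/-- The safe (no-effort) zone `A`. -/
def SafeZone (β γ iM : ℝ) : Set (ℝ × ℝ) :=
  {p | p ∈ Triangle ∧ ∃ s i : ℝ → ℝ,
    SIRSol β γ (fun _ => 0) s i p.1 p.2 ∧ Admissible iM i}

/-- The viable (feasible) set `B`. -/
def ViableSet (β γ umax iM : ℝ) : Set (ℝ × ℝ) :=
  {p | p ∈ Triangle ∧ ∃ u s i : ℝ → ℝ, IsControl umax u ∧
    SIRSol β γ u s i p.1 p.2 ∧ Admissible iM i}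

/-- Weak* convergence in `L^∞(0,∞)`: testing against every `L¹` function. -/
def WeakStarLim (un : ℕ → ℝ → ℝ) (u : ℝ → ℝ) : Prop :=
  ∀ g : ℝ → ℝ, MeasureTheory.IntegrableOn g (Set.Ioi 0) →
    Filter.Tendsto (fun n => ∫ t in Set.Ioi (0:ℝ), un n t * g t) Filter.atTop
      (nhds (∫ t in Set.Ioi (0:ℝ), u t * g t))

/-!
Since `s` is nonincreasing and positive, it converges to some `L`; suppose `L ≥ γ/β`.

From any viable initial state there is an admissible control of finite cost: follow a viable
control until `(β - u_max) s < γ` and `i` is small, then switch to the feedback keeping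
`(β - v) s = βσ`, for a level `σ < γ/β` given by the intermediate value theorem. Along it
`i` decays like `e^{-(γ - βσ) t}`, `s` decreases to `σ`, and `v` decays like `s - σ`.
Hence the optimal cost is finite and, as `λ₁ > 0`, so is `∫ u`.

Above the threshold `γ/β` we have `i' ≥ -u s i ≥ -u i`. Once the remaining control effort is
at most `1/2`, any bound `M` on the tail of `i` therefore improves to `M/2`, because `i` comes
arbitrarily close to `0` (as `γ ∫ i ≤ s₀ + i₀`). So `i` vanishes on that tail, contradicting
`i > 0`.
-/

open Topology

section LinearIntegralEquation

variable {f q : ℝ → ℝ}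

theorem eq_add_integral_of_eq_add_integral_zero {F : ℝ → ℝ} {x₀ : ℝ}
    (hF : ∀ a b, IntervalIntegrable F volume a b)
    (h : ∀ t, 0 ≤ t → f t = x₀ + ∫ τ in (0:ℝ)..t, F τ) {a b : ℝ} (ha : 0 ≤ a) (hb : 0 ≤ b) :
    f b = f a + ∫ τ in a..b, F τ := by
  rw [h b hb, h a ha, ← integral_add_adjacent_intervals (hF 0 a) (hF a b), add_assoc]

theorem eq_zero_left_of_linear_integral_eq {a b A : ℝ} (hab : a ≤ b)
    (hf : ContinuousOn f (Icc a b)) (hq : ∀ τ ∈ Icc a b, |q τ| ≤ A)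
    (hshort : A * (b - a) ≤ 1 / 2)
    (heq : ∀ τ ∈ Icc a b, f b = f τ + ∫ x in τ..b, q x * f x) (hb : f b = 0) : f a = 0 := by
  obtain ⟨τ, hτ, hmax⟩ := isCompact_Icc.exists_isMaxOn (nonempty_Icc.2 hab) hf.abs
  have hA : 0 ≤ A := (abs_nonneg _).trans (hq a (left_mem_Icc.2 hab))
  have hint : ‖∫ x in τ..b, q x * f x‖ ≤ A * |f τ| * |b - τ| := by
    refine intervalIntegral.norm_integral_le_of_norm_le_const fun x hx => ?_
    rw [uIoc_of_le hτ.2] at hx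
    have hx' : x ∈ Icc a b := ⟨hτ.1.trans hx.1.le, hx.2⟩
    rw [Real.norm_eq_abs, abs_mul]
    exact mul_le_mul (hq x hx') (hmax hx') (abs_nonneg _) hA
  have hfτ : |f τ| ≤ |f τ| / 2 := by
    have hlen : |b - τ| ≤ b - a := by rw [abs_of_nonneg (by linarith [hτ.2])]; linarith [hτ.1]
    have hfτ_eq : f τ = -∫ x in τ..b, q x * f x := by linarith [heq τ hτ]
    calc |f τ| = ‖∫ x in τ..b, q x * f x‖ := by rw [hfτ_eq, Real.norm_eq_abs, abs_neg]
      _ ≤ A * |f τ| * (b - a) :=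
          hint.trans (mul_le_mul_of_nonneg_left hlen (mul_nonneg hA (abs_nonneg _)))
      _ ≤ |f τ| / 2 := by nlinarith [abs_nonneg (f τ)]
  exact abs_nonpos_iff.1 ((hmax (left_mem_Icc.2 hab)).trans (by linarith))

theorem pos_of_linear_integral_eq (hf : Continuous f)
    (hq : ∀ T, ∃ A, ∀ τ ∈ Icc 0 T, |q τ| ≤ A)
    (heq : ∀ a b, 0 ≤ a → 0 ≤ b → f b = f a + ∫ τ in a..b, q τ * f τ)
    (h0 : 0 < f 0) {t : ℝ} (ht : 0 ≤ t) : 0 < f t := by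
  obtain ⟨A, hA⟩ := hq t
  have hA0 : 0 ≤ A := (abs_nonneg _).trans (hA 0 ⟨le_rfl, ht⟩)
  set ε := 1 / (2 * (A + 1)) with hε_def
  have hε : 0 < ε := by positivity
  have hAε : A * ε ≤ 1 / 2 := by
    rw [hε_def, mul_one_div, div_le_div_iff₀ (by positivity) (by norm_num)]
    linarith
  -- a zero of `f` would propagate to the left in steps of length `ε`, down to `f 0 > 0`
  have hback : ∀ b ∈ Icc 0 t, f b = 0 → f (max (b - ε) 0) = 0 := by
    intro b hb hfb
    have hlen : b - max (b - ε) 0 ≤ ε := by linarith [le_max_left (b - ε) 0]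
    refine eq_zero_left_of_linear_integral_eq (max_le (by linarith) hb.1) hf.continuousOn
      (fun τ hτ => hA τ ⟨(le_max_right _ _).trans hτ.1, hτ.2.trans hb.2⟩)
      ((mul_le_mul_of_nonneg_left hlen hA0).trans hAε)
      (fun τ hτ => heq τ b ((le_max_right _ _).trans hτ.1) hb.1) hfb
  have hne : ∀ n : ℕ, ∀ b ∈ Icc 0 t, b ≤ n * ε → f b ≠ 0 := by
    intro n
    induction n with
    | zero =>
      intro b hb hbn
      obtain rfl : b = 0 := le_antisymm (by simpa using hbn) hb.1
      exact h0.ne'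
    | succ n ih =>
      intro b hb hbn hfb
      refine ih _ ⟨le_max_right _ _, max_le (by linarith [hb.2]) ht⟩
        (max_le (by push_cast at hbn; linarith) (by positivity)) (hback b hb hfb)
  obtain ⟨n, hn⟩ := exists_nat_ge (t / ε)
  by_contra hneg
  obtain ⟨c, hc, hfc⟩ := intermediate_value_Icc' ht hf.continuousOn ⟨not_lt.1 hneg, h0.le⟩
  exact hne n c hc (hc.2.trans ((div_le_iff₀ hε).1 hn)) hfc

end LinearIntegralEquation

theorem AntitoneOn.exists_tendsto_atTop {f : ℝ → ℝ} {a b : ℝ} (hf : AntitoneOn f (Ici a))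
    (hb : ∀ t, a ≤ t → b ≤ f t) : ∃ L, Tendsto f atTop (𝓝 L) ∧ ∀ t, a ≤ t → L ≤ f t := by
  have hg : Antitone fun t : Ici a => f t := fun x y hxy => hf x.2 y.2 hxy
  have hlim := tendsto_atTop_ciInf hg ⟨b, by rintro _ ⟨t, rfl⟩; exact hb t t.2⟩
  exact ⟨_, tendsto_comp_val_Ici_atTop.1 hlim, fun t ht => hg.le_of_tendsto hlim ⟨t, ht⟩⟩

theorem tendsto_setIntegral_Ioi_atTop {f : ℝ → ℝ} {a : ℝ} (hf : IntegrableOn f (Ioi a)) :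
    Tendsto (fun b => ∫ t in Ioi b, f t) atTop (𝓝 0) := by
  have hlim := tendsto_setIntegral_of_antitone (fun b => measurableSet_Ioi)
    (fun b c hbc => Ioi_subset_Ioi hbc) ⟨a, hf⟩
  have hempty : ⋂ b : ℝ, Ioi b = ∅ := iInter_eq_empty_iff.2 fun x => ⟨x, lt_irrefl x⟩
  simpa [hempty] using hlim

namespace IsControl

variable {umax : ℝ} {u : ℝ → ℝ}

theorem nonneg (hu : IsControl umax u) (t : ℝ) : 0 ≤ u t := (hu.2 t).1

theorem le (hu : IsControl umax u) (t : ℝ) : u t ≤ umax := (hu.2 t).2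

theorem intervalIntegrable (hu : IsControl umax u) (a b : ℝ) :
    IntervalIntegrable u volume a b :=
  (intervalIntegrable_const (c := umax)).mono_fun hu.1.aestronglyMeasurable <|
    ae_of_all _ fun t => by
      simp only [Real.norm_eq_abs, abs_of_nonneg (hu.nonneg t)]
      exact (hu.le t).trans (le_abs_self _)

theorem intervalIntegrable_mul (hu : IsControl umax u) {f : ℝ → ℝ} (hf : Continuous f)
    (a b : ℝ) : IntervalIntegrable (fun t => u t * f t) volume a b :=
  (hu.intervalIntegrable a b).mul_continuousOn hf.continuousOn

theorem intervalIntegrable_rhs_s (hu : IsControl umax u) (β : ℝ) {s i : ℝ → ℝ}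
    (hs : Continuous s) (hi : Continuous i) (a b : ℝ) :
    IntervalIntegrable (fun τ => -((β - u τ) * s τ * i τ)) volume a b := by
  have e : (fun τ => -((β - u τ) * s τ * i τ)) =
      fun τ => u τ * (s τ * i τ) - β * (s τ * i τ) := by ext; ring
  rw [e]
  exact (hu.intervalIntegrable_mul (hs.mul hi) a b).sub
    ((continuous_const.mul (hs.mul hi)).intervalIntegrable a b)

theorem intervalIntegrable_rhs_i (hu : IsControl umax u) (β γ : ℝ) {s i : ℝ → ℝ}
    (hs : Continuous s) (hi : Continuous i) (a b : ℝ) :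
    IntervalIntegrable (fun τ => (β - u τ) * s τ * i τ - γ * i τ) volume a b := by
  have e : (fun τ => (β - u τ) * s τ * i τ - γ * i τ) =
      fun τ => (β * (s τ * i τ) - γ * i τ) - u τ * (s τ * i τ) := by ext; ring
  rw [e]
  exact (((continuous_const.mul (hs.mul hi)).sub (continuous_const.mul hi)).intervalIntegrable
    a b).sub (hu.intervalIntegrable_mul (hs.mul hi) a b)

theorem exists_abs_mul_le (hu : IsControl umax u) {f : ℝ → ℝ} (hf : Continuous f) (c T : ℝ) :
    ∃ A, ∀ τ ∈ Icc 0 T, |(c - u τ) * f τ| ≤ A := by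
  obtain ⟨M, hM⟩ := isCompact_Icc.exists_bound_of_continuousOn hf.continuousOn (s := Icc 0 T)
  have hc : ∀ τ, |c - u τ| ≤ |c| + umax := fun τ =>
    (abs_sub c (u τ)).trans (by rw [abs_of_nonneg (hu.nonneg τ)]; linarith [hu.le τ])
  refine ⟨(|c| + umax) * M, fun τ hτ => ?_⟩
  rw [abs_mul]
  exact mul_le_mul (hc τ) (hM τ hτ) (abs_nonneg _) ((abs_nonneg _).trans (hc τ))

theorem integrableOn_of_cost_lt_top {l1 l2 : ℝ} {i : ℝ → ℝ}
    (hu : IsControl umax u) (hl1 : 0 < l1) (hl2 : 0 ≤ l2) (hi : ∀ t, 0 < t → 0 ≤ i t)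
    (hcost : Cost l1 l2 u i < ⊤) : IntegrableOn u (Ioi 0) := by
  refine ⟨hu.1.aestronglyMeasurable, ?_⟩
  rw [hasFiniteIntegral_iff_ofReal (ae_of_all _ hu.nonneg)]
  have hle : ∫⁻ t in Ioi 0, ENNReal.ofReal (u t) ≤ ENNReal.ofReal l1⁻¹ * Cost l1 l2 u i := by
    rw [Cost, ← lintegral_const_mul' _ _ ENNReal.ofReal_ne_top]
    refine setLIntegral_mono' measurableSet_Ioi fun t ht => ?_
    rw [← ENNReal.ofReal_mul (inv_nonneg.2 hl1.le)]
    refine ENNReal.ofReal_le_ofReal ((le_inv_mul_iff₀ hl1).2 ?_)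
    nlinarith [mul_nonneg hl2 (hi t ht)]
  exact hle.trans_lt (ENNReal.mul_lt_top ENNReal.ofReal_lt_top hcost)

end IsControl

namespace SIRSol

variable {β γ umax s₀ i₀ : ℝ} {u s i : ℝ → ℝ}

theorem s_zero (hsol : SIRSol β γ u s i s₀ i₀) : s 0 = s₀ := by
  simpa using hsol.2.2.1 0 le_rfl

theorem i_zero (hsol : SIRSol β γ u s i s₀ i₀) : i 0 = i₀ := by
  simpa using hsol.2.2.2 0 le_rfl

theorem s_eq (hsol : SIRSol β γ u s i s₀ i₀) (hu : IsControl umax u) {a b : ℝ}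
    (ha : 0 ≤ a) (hb : 0 ≤ b) : s b = s a + ∫ τ in a..b, -((β - u τ) * s τ * i τ) :=
  eq_add_integral_of_eq_add_integral_zero (hu.intervalIntegrable_rhs_s β hsol.1 hsol.2.1)
    hsol.2.2.1 ha hb

theorem i_eq (hsol : SIRSol β γ u s i s₀ i₀) (hu : IsControl umax u) {a b : ℝ}
    (ha : 0 ≤ a) (hb : 0 ≤ b) :
    i b = i a + ∫ τ in a..b, ((β - u τ) * s τ * i τ - γ * i τ) :=
  eq_add_integral_of_eq_add_integral_zero (hu.intervalIntegrable_rhs_i β γ hsol.1 hsol.2.1)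
    hsol.2.2.2 ha hb

theorem s_pos (hsol : SIRSol β γ u s i s₀ i₀) (hu : IsControl umax u) (hs₀ : 0 < s₀)
    {t : ℝ} (ht : 0 ≤ t) : 0 < s t := by
  refine pos_of_linear_integral_eq (q := fun τ => -((β - u τ) * i τ)) hsol.1 (fun T => ?_)
    (fun a b ha hb => ?_) (hsol.s_zero ▸ hs₀) ht
  · obtain ⟨A, hA⟩ := hu.exists_abs_mul_le hsol.2.1 β T
    exact ⟨A, fun τ hτ => by rw [abs_neg]; exact hA τ hτ⟩
  · rw [hsol.s_eq hu ha hb]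
    congr 1
    exact integral_congr fun τ _ => by ring

theorem i_pos (hsol : SIRSol β γ u s i s₀ i₀) (hu : IsControl umax u) (hi₀ : 0 < i₀)
    {t : ℝ} (ht : 0 ≤ t) : 0 < i t := by
  refine pos_of_linear_integral_eq (q := fun τ => (β - u τ) * s τ - γ) hsol.2.1 (fun T => ?_)
    (fun a b ha hb => ?_) (hsol.i_zero ▸ hi₀) ht
  · obtain ⟨A, hA⟩ := hu.exists_abs_mul_le hsol.1 β T
    exact ⟨A + |γ|, fun τ hτ => (abs_sub _ _).trans (by linarith [hA τ hτ])⟩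
  · rw [hsol.i_eq hu ha hb]
    congr 1
    exact integral_congr fun τ _ => by ring

theorem s_antitoneOn (hsol : SIRSol β γ u s i s₀ i₀) (hu : IsControl umax u)
    (hβu : umax ≤ β) (hs₀ : 0 < s₀) (hi₀ : 0 < i₀) : AntitoneOn s (Ici 0) := by
  intro a ha b hb hab
  have hint : 0 ≤ ∫ τ in a..b, (β - u τ) * s τ * i τ := by
    refine integral_nonneg hab fun τ hτ => ?_
    have hτ0 : (0:ℝ) ≤ τ := le_trans ha hτ.1
    have hβτ : 0 ≤ β - u τ := by linarith [hu.le τ]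
    exact mul_nonneg (mul_nonneg hβτ (hsol.s_pos hu hs₀ hτ0).le) (hsol.i_pos hu hi₀ hτ0).le
  rw [hsol.s_eq hu ha hb, intervalIntegral.integral_neg]
  linarith

theorem s_add_i_add_integral (hsol : SIRSol β γ u s i s₀ i₀) (hu : IsControl umax u)
    {t : ℝ} (ht : 0 ≤ t) : s t + i t + γ * ∫ τ in (0:ℝ)..t, i τ = s₀ + i₀ := by
  have hsum := integral_add (hu.intervalIntegrable_rhs_s β hsol.1 hsol.2.1 0 t)
    (hu.intervalIntegrable_rhs_i β γ hsol.1 hsol.2.1 0 t)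
  have hcancel : ∫ τ in (0:ℝ)..t, (-((β - u τ) * s τ * i τ) + ((β - u τ) * s τ * i τ - γ * i τ))
      = -(γ * ∫ τ in (0:ℝ)..t, i τ) := by
    rw [← intervalIntegral.integral_const_mul, ← intervalIntegral.integral_neg]
    exact integral_congr fun τ _ => by ring
  rw [hsol.2.2.1 t ht, hsol.2.2.2 t ht]
  linarith

theorem integral_i_le (hsol : SIRSol β γ u s i s₀ i₀) (hu : IsControl umax u) (hγ : 0 < γ)
    (hs₀ : 0 < s₀) (hi₀ : 0 < i₀) {t : ℝ} (ht : 0 ≤ t) :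
    ∫ τ in (0:ℝ)..t, i τ ≤ (s₀ + i₀) / γ := by
  rw [le_div_iff₀ hγ, ← hsol.s_add_i_add_integral hu ht]
  nlinarith [hsol.s_pos hu hs₀ ht, hsol.i_pos hu hi₀ ht]

theorem i_le (hsol : SIRSol β γ u s i s₀ i₀) (hu : IsControl umax u) (hγ : 0 ≤ γ)
    (hs₀ : 0 < s₀) (hi₀ : 0 < i₀) {t : ℝ} (ht : 0 ≤ t) : i t ≤ s₀ + i₀ := by
  have : 0 ≤ ∫ τ in (0:ℝ)..t, i τ :=
    integral_nonneg ht fun τ hτ => (hsol.i_pos hu hi₀ hτ.1).le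
  rw [← hsol.s_add_i_add_integral hu ht]
  nlinarith [hsol.s_pos hu hs₀ ht]

/-- The integral bound forbids `i` from staying above any positive level. -/
theorem frequently_i_lt (hsol : SIRSol β γ u s i s₀ i₀) (hu : IsControl umax u) (hγ : 0 < γ)
    (hs₀ : 0 < s₀) (hi₀ : 0 < i₀) {ε : ℝ} (hε : 0 < ε) : ∃ᶠ t in atTop, i t < ε := by
  intro hev
  obtain ⟨T, hT⟩ := eventually_atTop.1 (hev.mono fun t ht => not_lt.1 ht)
  set T' := max T 0
  set X := (s₀ + i₀) / γ / ε + 1 with hX_def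
  have hX : 0 < X := by positivity
  have hhead : 0 ≤ ∫ τ in (0:ℝ)..T', i τ :=
    integral_nonneg (le_max_right _ _) fun τ hτ => (hsol.i_pos hu hi₀ hτ.1).le
  have htail : ε * X ≤ ∫ τ in T'..T' + X, i τ := by
    have := integral_mono_on (μ := volume) (by linarith) intervalIntegrable_const
      (hsol.2.1.intervalIntegrable T' (T' + X)) fun τ hτ => hT τ ((le_max_left _ _).trans hτ.1)
    simpa [mul_comm] using this
  have hsplit := integral_add_adjacent_intervals (hsol.2.1.intervalIntegrable (μ := volume) 0 T')
    (hsol.2.1.intervalIntegrable T' (T' + X))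
  have hbound := hsol.integral_i_le hu hγ hs₀ hi₀ (by positivity : 0 ≤ T' + X)
  have hεX : ε * X = (s₀ + i₀) / γ + ε := by rw [hX_def]; field_simp
  linarith

theorem exists_s_lt (hsol : SIRSol β γ u s i s₀ i₀) (hu : IsControl umax u) (hγ : 0 < γ)
    (hs₀ : 0 < s₀) (hi₀ : 0 < i₀) : ∃ T, 0 ≤ T ∧ (β - umax) * s T < γ := by
  by_contra! h
  have hgrow : ∀ t, 0 ≤ t → i₀ ≤ i t := by
    intro t ht
    have hint : 0 ≤ ∫ τ in (0:ℝ)..t, ((β - u τ) * s τ * i τ - γ * i τ) := by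
      refine integral_nonneg ht fun τ hτ => ?_
      have hs := hsol.s_pos hu hs₀ hτ.1
      have hi := hsol.i_pos hu hi₀ hτ.1
      have : γ ≤ (β - u τ) * s τ := (h τ hτ.1).trans (by nlinarith [hu.le τ])
      nlinarith
    rw [hsol.2.2.2 t ht]
    linarith
  obtain ⟨t, hit, ht⟩ := ((hsol.frequently_i_lt hu hγ hs₀ hi₀ hi₀).and_eventually
    (eventually_ge_atTop 0)).exists
  exact hit.not_ge (hgrow t ht)

theorem exists_tendsto_s (hsol : SIRSol β γ u s i s₀ i₀) (hu : IsControl umax u)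
    (hβu : umax ≤ β) (hs₀ : 0 < s₀) (hi₀ : 0 < i₀) :
    ∃ L, Tendsto s atTop (𝓝 L) ∧ ∀ t, 0 ≤ t → L ≤ s t :=
  (hsol.s_antitoneOn hu hβu hs₀ hi₀).exists_tendsto_atTop fun _ ht => (hsol.s_pos hu hs₀ ht).le

/-- Above the herd-immunity threshold `i` can only decrease through the control. -/
theorem i_sub_mul_integral_le (hsol : SIRSol β γ u s i s₀ i₀) (hu : IsControl umax u) (hβ : 0 < β)
    (hβu : umax ≤ β) (hs₀ : 0 < s₀) (hs₀1 : s₀ ≤ 1) (hi₀ : 0 < i₀)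
    (hherd : ∀ t, 0 ≤ t → γ / β ≤ s t) {a₀ M : ℝ} (ha₀ : 0 ≤ a₀)
    (hint : IntegrableOn u (Ioi a₀)) (hM : ∀ t, a₀ ≤ t → i t ≤ M) {a t : ℝ} (ha : a₀ ≤ a)
    (hat : a ≤ t) : i a - M * ∫ τ in Ioi a₀, u τ ≤ i t := by
  have ha0 : 0 ≤ a := ha₀.trans ha
  have hM0 : 0 ≤ M := (hsol.i_pos hu hi₀ ha₀).le.trans (hM a₀ le_rfl)
  have hlow : ∀ τ ∈ Icc a t, -(M * u τ) ≤ (β - u τ) * s τ * i τ - γ * i τ := by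
    intro τ hτ
    have hτ0 : 0 ≤ τ := ha0.trans hτ.1
    have hs1 : s τ ≤ 1 :=
      (hsol.s_antitoneOn hu hβu hs₀ hi₀ (mem_Ici.2 le_rfl) hτ0 hτ0).trans (hsol.s_zero ▸ hs₀1)
    have hγs : γ ≤ β * s τ := (div_le_iff₀' hβ).1 (hherd τ hτ0)
    have hi := hsol.i_pos hu hi₀ hτ0
    have hsi : s τ * i τ ≤ M := by nlinarith [hM τ (ha.trans hτ.1)]
    nlinarith [mul_nonneg (sub_nonneg.2 hγs) hi.le, mul_nonneg (hu.nonneg τ) (sub_nonneg.2 hsi)]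
  have hu_le : ∫ τ in a..t, u τ ≤ ∫ τ in Ioi a₀, u τ := by
    rw [integral_of_le hat]
    exact setIntegral_mono_set hint (ae_of_all _ hu.nonneg)
      (Eventually.of_forall fun x hx => ha.trans_lt hx.1)
  have hmono := integral_mono_on (f := fun τ => -(M * u τ)) hat
    ((hu.intervalIntegrable a t).const_mul M).neg
    (hu.intervalIntegrable_rhs_i β γ hsol.1 hsol.2.1 a t) hlow
  rw [intervalIntegral.integral_neg, intervalIntegral.integral_const_mul] at hmono
  rw [hsol.i_eq hu ha0 (ha0.trans hat)]
  nlinarith [mul_le_mul_of_nonneg_left hu_le hM0]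

/-- Repeatedly halving the bound on `i` beyond a time after which the control has total
effort at most `1/2` would force `i = 0` there. -/
theorem not_integrableOn_control (hsol : SIRSol β γ u s i s₀ i₀) (hu : IsControl umax u)
    (hβ : 0 < β) (hγ : 0 < γ) (hβu : umax ≤ β) (hs₀ : 0 < s₀) (hs₀1 : s₀ ≤ 1) (hi₀ : 0 < i₀)
    (hherd : ∀ t, 0 ≤ t → γ / β ≤ s t) : ¬ IntegrableOn u (Ioi 0) := by
  intro hint
  obtain ⟨a₀, htail, ha₀⟩ := (((tendsto_setIntegral_Ioi_atTop hint).eventually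
    (eventually_le_nhds (by norm_num : (0:ℝ) < 1 / 2))).and (eventually_ge_atTop 0)).exists
  have hint₀ : IntegrableOn u (Ioi a₀) := hint.mono_set (Ioi_subset_Ioi ha₀)
  have hhalve : ∀ M, (∀ t, a₀ ≤ t → i t ≤ M) → ∀ t, a₀ ≤ t → i t ≤ M / 2 := by
    intro M hM a ha
    have hM0 : 0 ≤ M := (hsol.i_pos hu hi₀ ha₀).le.trans (hM a₀ le_rfl)
    refine le_of_forall_pos_le_add fun η hη => ?_
    obtain ⟨t, hit, hat⟩ := ((hsol.frequently_i_lt hu hγ hs₀ hi₀ hη).and_eventually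
      (eventually_ge_atTop a)).exists
    have hdrop := hsol.i_sub_mul_integral_le hu hβ hβu hs₀ hs₀1 hi₀ hherd ha₀ hint₀ hM ha hat
    nlinarith [mul_le_mul_of_nonneg_left htail hM0]
  have hgeom : ∀ n : ℕ, ∀ t, a₀ ≤ t → i t ≤ (s₀ + i₀) * (1 / 2) ^ n := by
    intro n
    induction n with
    | zero => intro t ht; simpa using hsol.i_le hu hγ.le hs₀ hi₀ (ha₀.trans ht)
    | succ n ih =>
      intro t ht
      rw [pow_succ, ← mul_assoc, mul_one_div]
      exact hhalve _ ih t ht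
  have hlim : Tendsto (fun n : ℕ => (s₀ + i₀) * (1 / 2) ^ n) atTop (𝓝 0) := by
    simpa using (tendsto_pow_atTop_nhds_zero_of_lt_one (by norm_num)
      (by norm_num : (1 / 2 : ℝ) < 1)).const_mul (s₀ + i₀)
  exact (hsol.i_pos hu hi₀ ha₀).not_ge (ge_of_tendsto' hlim fun n => hgeom n a₀ le_rfl)

end SIRSol

def glueAt (T : ℝ) (f g : ℝ → ℝ) (t : ℝ) : ℝ := if t ≤ T then f t else g t

section Glue

variable {T : ℝ} {f g : ℝ → ℝ}

theorem glueAt_of_le {t : ℝ} (ht : t ≤ T) : glueAt T f g t = f t := if_pos ht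

theorem glueAt_of_lt {t : ℝ} (ht : T < t) : glueAt T f g t = g t := if_neg ht.not_ge

theorem continuous_glueAt (hf : Continuous f) (hg : Continuous g) (hT : f T = g T) :
    Continuous (glueAt T f g) :=
  Continuous.if_le hf hg continuous_id continuous_const fun _ hx => hx ▸ hT

theorem measurable_glueAt (hf : Measurable f) (hg : Measurable g) :
    Measurable (glueAt T f g) :=
  Measurable.ite measurableSet_Iic hf hg

theorem glueAt_eq_add_integral {F₁ F₂ : ℝ → ℝ} {x₀ : ℝ} (hT : 0 ≤ T)
    (hF : ∀ a b, IntervalIntegrable (glueAt T F₁ F₂) volume a b)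
    (hf : ∀ t, 0 ≤ t → f t = x₀ + ∫ τ in (0:ℝ)..t, F₁ τ)
    (hg : ∀ t, T ≤ t → g t = f T + ∫ τ in T..t, F₂ τ) {t : ℝ} (ht : 0 ≤ t) :
    glueAt T f g t = x₀ + ∫ τ in (0:ℝ)..t, glueAt T F₁ F₂ τ := by
  have hhead : ∀ t, 0 ≤ t → t ≤ T → ∫ τ in (0:ℝ)..t, glueAt T F₁ F₂ τ = ∫ τ in (0:ℝ)..t, F₁ τ :=
    fun t ht htT => integral_congr_ae <| ae_of_all _ fun τ hτ => by
      rw [uIoc_of_le ht] at hτ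
      exact glueAt_of_le (hτ.2.trans htT)
  rcases le_or_gt t T with htT | hTt
  · rw [glueAt_of_le htT, hf t ht, hhead t ht htT]
  · have htail : ∫ τ in T..t, glueAt T F₁ F₂ τ = ∫ τ in T..t, F₂ τ :=
      integral_congr_ae <| ae_of_all _ fun τ hτ => by
        rw [uIoc_of_le hTt.le] at hτ
        exact glueAt_of_lt hτ.1
    rw [glueAt_of_lt hTt, hg t hTt.le, hf T hT, ← integral_add_adjacent_intervals (hF 0 T) (hF T t),
      hhead T hT le_rfl, htail, add_assoc]

end Glue

theorem IsControl.glue {umax T : ℝ} {u v : ℝ → ℝ} (hu : IsControl umax u)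
    (hv : Measurable v) (hvb : ∀ t, T < t → v t ∈ Icc 0 umax) :
    IsControl umax (glueAt T u v) := by
  refine ⟨measurable_glueAt hu.1 hv, fun t => ?_⟩
  rcases le_or_gt t T with h | h
  · rw [glueAt_of_le h]; exact hu.2 t
  · rw [glueAt_of_lt h]; exact hvb t h

theorem SIRSol.glue {β γ umax s₀ i₀ T : ℝ} {u₁ s₁ i₁ u₂ s₂ i₂ : ℝ → ℝ}
    (hsol : SIRSol β γ u₁ s₁ i₁ s₀ i₀) (hT : 0 ≤ T) (hu : IsControl umax (glueAt T u₁ u₂))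
    (hs₂ : Continuous s₂) (hi₂ : Continuous i₂)
    (hs₂eq : ∀ t, T ≤ t → s₂ t = s₁ T + ∫ τ in T..t, -((β - u₂ τ) * s₂ τ * i₂ τ))
    (hi₂eq : ∀ t, T ≤ t → i₂ t = i₁ T + ∫ τ in T..t, ((β - u₂ τ) * s₂ τ * i₂ τ - γ * i₂ τ)) :
    SIRSol β γ (glueAt T u₁ u₂) (glueAt T s₁ s₂) (glueAt T i₁ i₂) s₀ i₀ := by
  have hs := continuous_glueAt hsol.1 hs₂ (by simpa using (hs₂eq T le_rfl).symm)
  have hi := continuous_glueAt hsol.2.1 hi₂ (by simpa using (hi₂eq T le_rfl).symm)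
  have hds : glueAt T (fun τ => -((β - u₁ τ) * s₁ τ * i₁ τ)) (fun τ => -((β - u₂ τ) * s₂ τ * i₂ τ))
      = fun τ => -((β - glueAt T u₁ u₂ τ) * glueAt T s₁ s₂ τ * glueAt T i₁ i₂ τ) := by
    ext τ; by_cases h : τ ≤ T <;> simp [glueAt, h]
  have hdi : glueAt T (fun τ => (β - u₁ τ) * s₁ τ * i₁ τ - γ * i₁ τ)
        (fun τ => (β - u₂ τ) * s₂ τ * i₂ τ - γ * i₂ τ)
      = fun τ => (β - glueAt T u₁ u₂ τ) * glueAt T s₁ s₂ τ * glueAt T i₁ i₂ τ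
          - γ * glueAt T i₁ i₂ τ := by
    ext τ; by_cases h : τ ≤ T <;> simp [glueAt, h]
  refine ⟨hs, hi, fun t ht => ?_, fun t ht => ?_⟩
  · simpa only [hds] using glueAt_eq_add_integral hT (hds ▸ hu.intervalIntegrable_rhs_s β hs hi)
      hsol.2.2.1 hs₂eq ht
  · simpa only [hdi] using glueAt_eq_add_integral hT (hdi ▸ hu.intervalIntegrable_rhs_i β γ hs hi)
      hsol.2.2.2 hi₂eq ht

def decayAt (δ T t : ℝ) : ℝ := Real.exp (-(δ * (t - T)))

section Decay

variable {δ T : ℝ}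

theorem decayAt_pos (t : ℝ) : 0 < decayAt δ T t := Real.exp_pos _

theorem decayAt_self : decayAt δ T T = 1 := by simp [decayAt]

theorem decayAt_le_one (hδ : 0 ≤ δ) {t : ℝ} (ht : T ≤ t) : decayAt δ T t ≤ 1 :=
  Real.exp_le_one_iff.2 (neg_nonpos.2 (mul_nonneg hδ (sub_nonneg.2 ht)))

theorem continuous_decayAt : Continuous (decayAt δ T) := by
  unfold decayAt; fun_prop

theorem hasDerivAt_decayAt (t : ℝ) : HasDerivAt (decayAt δ T) (-(δ * decayAt δ T t)) t := by
  have h : HasDerivAt (fun x => -(δ * (x - T))) (-(δ * 1)) t :=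
    (((hasDerivAt_id t).sub_const T).const_mul δ).neg
  convert h.exp using 1
  · rfl
  · rw [decayAt]; ring

theorem integrableOn_decayAt (hδ : 0 < δ) : IntegrableOn (decayAt δ T) (Ioi T) := by
  have e : decayAt δ T = fun t => Real.exp (δ * T) * Real.exp (-δ * t) := by
    ext t; rw [decayAt, ← Real.exp_add]; ring_nf
  rw [e]
  exact (exp_neg_integrableOn_Ioi T hδ).const_mul _

end Decay

/-- The control keeping `(β - v) s = βσ` along `s = σ + c e^{-δ(t-T)}`. -/
def finalControl (β σ c δ T t : ℝ) : ℝ := β * c * decayAt δ T t / (σ + c * decayAt δ T t)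

section FinalPhase

variable {β γ σ c δ I T : ℝ}

theorem add_mul_decayAt_pos (hσ : 0 < σ) (hc : 0 ≤ c) (t : ℝ) : 0 < σ + c * decayAt δ T t := by
  have := decayAt_pos (δ := δ) (T := T) t; positivity

theorem sub_finalControl_mul (hσ : 0 < σ) (hc : 0 ≤ c) (t : ℝ) :
    (β - finalControl β σ c δ T t) * (σ + c * decayAt δ T t) = β * σ := by
  have := (add_mul_decayAt_pos (δ := δ) (T := T) hσ hc t).ne'
  rw [finalControl]; field_simp; ring

theorem continuous_finalControl (hσ : 0 < σ) (hc : 0 ≤ c) :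
    Continuous (finalControl β σ c δ T) :=
  (continuous_const.mul continuous_decayAt).div (continuous_const.add
    (continuous_const.mul continuous_decayAt)) fun t => (add_mul_decayAt_pos hσ hc t).ne'

theorem finalControl_nonneg (hβ : 0 ≤ β) (hσ : 0 < σ) (hc : 0 ≤ c) (t : ℝ) :
    0 ≤ finalControl β σ c δ T t :=
  div_nonneg (by have := decayAt_pos (δ := δ) (T := T) t; positivity)
    (add_mul_decayAt_pos hσ hc t).le

theorem finalControl_le (hβ : 0 ≤ β) (hσ : 0 < σ) (hc : 0 ≤ c) (t : ℝ) :
    finalControl β σ c δ T t ≤ β * c / σ * decayAt δ T t := by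
  have hy := decayAt_pos (δ := δ) (T := T) t
  rw [finalControl, div_mul_eq_mul_div, div_le_div_iff₀ (add_mul_decayAt_pos hσ hc t) hσ]
  nlinarith [mul_nonneg (mul_nonneg (mul_nonneg hβ hc) hy.le) (mul_nonneg hc hy.le)]

theorem finalControl_le_umax {umax : ℝ} (hβu : umax ≤ β) (hσ : 0 < σ) (hc : 0 ≤ c)
    (hδ : 0 ≤ δ) (hmax : (β - umax) * (σ + c) ≤ β * σ) {t : ℝ} (ht : T ≤ t) :
    finalControl β σ c δ T t ≤ umax := by
  have hy := decayAt_pos (δ := δ) (T := T) t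
  have hy1 := decayAt_le_one hδ ht
  rw [finalControl, div_le_iff₀ (add_mul_decayAt_pos hσ hc t)]
  nlinarith [mul_le_mul_of_nonneg_left hy1 (mul_nonneg (sub_nonneg.2 hβu) hc)]

theorem integrableOn_finalControl (hβ : 0 ≤ β) (hσ : 0 < σ) (hc : 0 ≤ c) (hδ : 0 < δ) :
    IntegrableOn (finalControl β σ c δ T) (Ioi T) :=
  ((integrableOn_decayAt hδ).const_mul (β * c / σ)).mono'
    (continuous_finalControl hσ hc).aestronglyMeasurable <| ae_of_all _ fun t => by
      rw [Real.norm_eq_abs, abs_of_nonneg (finalControl_nonneg hβ hσ hc t)]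
      exact finalControl_le hβ hσ hc t

theorem finalPhase_s_eq (hσ : 0 < σ) (hc : 0 ≤ c) (hcδ : c * δ = β * σ * I) (t : ℝ) :
    σ + c * decayAt δ T t = σ + c + ∫ τ in T..t,
      -((β - finalControl β σ c δ T τ) * (σ + c * decayAt δ T τ) * (I * decayAt δ T τ)) := by
  have hint : ∫ τ in T..t,
      -((β - finalControl β σ c δ T τ) * (σ + c * decayAt δ T τ) * (I * decayAt δ T τ))
      = ∫ τ in T..t, c * -(δ * decayAt δ T τ) :=
    integral_congr fun τ _ => by
      rw [sub_finalControl_mul hσ hc]; linear_combination (decayAt δ T τ) * hcδ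
  rw [hint, integral_eq_sub_of_hasDerivAt (f := fun t => σ + c * decayAt δ T t)
    (fun τ _ => ((hasDerivAt_decayAt τ).const_mul c).const_add σ)
    ((continuous_const.mul (continuous_decayAt.const_mul δ).neg).intervalIntegrable T t),
    decayAt_self]
  ring

theorem finalPhase_i_eq (hσ : 0 < σ) (hc : 0 ≤ c) (hδ : β * σ + δ = γ) (t : ℝ) :
    I * decayAt δ T t = I + ∫ τ in T..t,
      ((β - finalControl β σ c δ T τ) * (σ + c * decayAt δ T τ) * (I * decayAt δ T τ)
        - γ * (I * decayAt δ T τ)) := by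
  have hint : ∫ τ in T..t,
      ((β - finalControl β σ c δ T τ) * (σ + c * decayAt δ T τ) * (I * decayAt δ T τ)
        - γ * (I * decayAt δ T τ)) = ∫ τ in T..t, I * -(δ * decayAt δ T τ) :=
    integral_congr fun τ _ => by
      rw [sub_finalControl_mul hσ hc]; linear_combination (I * decayAt δ T τ) * hδ
  rw [hint, integral_eq_sub_of_hasDerivAt (f := fun t => I * decayAt δ T t)
    (fun τ _ => (hasDerivAt_decayAt τ).const_mul I)
    ((continuous_const.mul (continuous_decayAt.const_mul δ).neg).intervalIntegrable T t),
    decayAt_self]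
  ring

end FinalPhase

theorem exists_final_level {β γ umax S I : ℝ} (hβ : 0 < β) (humax : 0 < umax)
    (hβu : umax < β) (hS : 0 < S) (hI : 0 < I)
    (hsmall : β * (β - umax) * I ≤ umax * (γ - (β - umax) * S)) :
    ∃ σ, 0 < σ ∧ σ < S ∧ (β - umax) * S ≤ β * σ ∧ 0 < γ - β * σ ∧
      (S - σ) * (γ - β * σ) = β * σ * I := by
  set G : ℝ → ℝ := fun x => (S - x) * (γ - β * x) - β * x * I with hG
  -- `x₀ ≤ σ` is what keeps the final control below `umax`
  set x₀ := (β - umax) * S / β with hx₀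
  have hβx₀ : β * x₀ = (β - umax) * S := by rw [hx₀]; field_simp
  have hx₀pos : 0 < x₀ := by have := sub_pos.2 hβu; positivity
  have hx₀S : x₀ < S := by rw [hx₀, div_lt_iff₀ hβ]; nlinarith
  have hGS : G S < 0 := by simp only [hG]; nlinarith [mul_pos (mul_pos hβ hS) hI]
  have hGx₀ : 0 ≤ G x₀ := by
    have e : β * G x₀ = S * (umax * (γ - (β - umax) * S) - β * (β - umax) * I) := by
      simp only [hG, hx₀]; field_simp; ring
    have : 0 ≤ β * G x₀ := e ▸ mul_nonneg hS.le (sub_nonneg.2 hsmall)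
    exact (mul_nonneg_iff_of_pos_left hβ).1 this
  obtain ⟨σ, ⟨hx₀σ, hσS⟩, hGσ⟩ := intermediate_value_Icc' hx₀S.le
    (by simp only [hG]; fun_prop : Continuous G).continuousOn ⟨hGS.le, hGx₀⟩
  have hσS' : σ < S := lt_of_le_of_ne hσS fun h => hGS.ne (h ▸ hGσ)
  have hσ : 0 < σ := hx₀pos.trans_le hx₀σ
  have hlevel : (S - σ) * (γ - β * σ) = β * σ * I := by simp only [hG] at hGσ; linarith
  refine ⟨σ, hσ, hσS', hβx₀ ▸ mul_le_mul_of_nonneg_left hx₀σ hβ.le, ?_, hlevel⟩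
  have : 0 < (S - σ) * (γ - β * σ) := hlevel ▸ by positivity
  exact (mul_pos_iff_of_pos_left (sub_pos.2 hσS')).1 this

namespace SIRSol

variable {β γ umax s₀ i₀ : ℝ} {u s i : ℝ → ℝ}

theorem exists_admissible_cost_lt_top_of_level {iM l1 l2 T σ : ℝ}
    (hsol : SIRSol β γ u s i s₀ i₀) (hu : IsControl umax u)
    (hadm : Admissible iM i) (hT : 0 ≤ T) (hβ : 0 < β) (hβu : umax ≤ β) (hσ : 0 < σ)
    (hσs : σ ≤ s T) (hmax : (β - umax) * s T ≤ β * σ) (hδ : 0 < γ - β * σ)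
    (hlevel : (s T - σ) * (γ - β * σ) = β * σ * i T) :
    ∃ v sv iv : ℝ → ℝ, IsControl umax v ∧ SIRSol β γ v sv iv s₀ i₀ ∧ Admissible iM iv ∧
      Cost l1 l2 v iv < ⊤ := by
  set c := s T - σ with hc_def
  set δ := γ - β * σ with hδ_def
  have hc : 0 ≤ c := sub_nonneg.2 hσs
  have hiT : 0 ≤ i T := by
    have : 0 ≤ β * σ * i T := hlevel ▸ mul_nonneg hc hδ.le
    exact (mul_nonneg_iff_of_pos_left (by positivity)).1 this
  have hv : IsControl umax (glueAt T u (finalControl β σ c δ T)) :=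
    hu.glue (continuous_finalControl hσ hc).measurable fun t ht =>
      ⟨finalControl_nonneg hβ.le hσ hc t,
        finalControl_le_umax hβu hσ hc hδ.le (by rwa [hc_def, add_sub_cancel]) ht.le⟩
  have hsolv := hsol.glue (s₂ := fun t => σ + c * decayAt δ T t)
    (i₂ := fun t => i T * decayAt δ T t) hT hv
    (continuous_const.add (continuous_const.mul continuous_decayAt))
    (continuous_const.mul continuous_decayAt)
    (fun t _ => by simpa [hc_def] using finalPhase_s_eq hσ hc hlevel t)
    (fun t _ => finalPhase_i_eq hσ hc (by ring) t)
  refine ⟨_, _, _, hv, hsolv, fun t ht => ?_, Integrable.lintegral_lt_top ?_⟩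
  · rcases le_or_gt t T with htT | hTt
    · rw [glueAt_of_le htT]; exact hadm t ht
    · rw [glueAt_of_lt hTt]
      exact (mul_le_of_le_one_right hiT (decayAt_le_one hδ.le hTt.le)).trans (hadm T hT)
  · rw [← Ioc_union_Ioi_eq_Ioi hT]
    refine IntegrableOn.union ?_ ?_
    · refine IntegrableOn.congr_fun (f := fun t => l1 * u t + l2 * i t) ?_
        (fun t ht => by simp only [glueAt_of_le ht.2]) measurableSet_Ioc
      exact (intervalIntegrable_iff_integrableOn_Ioc_of_le hT).1
        (((hu.intervalIntegrable 0 T).const_mul l1).add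
          ((hsol.2.1.intervalIntegrable 0 T).const_mul l2))
    · refine IntegrableOn.congr_fun
        (f := fun t => l1 * finalControl β σ c δ T t + l2 * (i T * decayAt δ T t)) ?_
        (fun t ht => by simp only [glueAt_of_lt ht]) measurableSet_Ioi
      exact ((integrableOn_finalControl hβ.le hσ hc hδ).const_mul l1).add
        (((integrableOn_decayAt hδ).const_mul (i T)).const_mul l2)

theorem exists_admissible_cost_lt_top {iM : ℝ} (hsol : SIRSol β γ u s i s₀ i₀)
    (hu : IsControl umax u) (hadm : Admissible iM i) (hβ : 0 < β) (hγ : 0 < γ)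
    (humax : 0 < umax) (hβu : umax < β) (hs₀ : 0 < s₀) (hi₀ : 0 < i₀) (l1 l2 : ℝ) :
    ∃ v sv iv : ℝ → ℝ, IsControl umax v ∧ SIRSol β γ v sv iv s₀ i₀ ∧ Admissible iM iv ∧
      Cost l1 l2 v iv < ⊤ := by
  obtain ⟨T₀, hT₀, hsT₀⟩ := hsol.exists_s_lt hu hγ hs₀ hi₀
  have hβu' := sub_pos.2 hβu
  have hε : 0 < umax * (γ - (β - umax) * s T₀) / (β * (β - umax)) := by
    have := sub_pos.2 hsT₀; positivity
  obtain ⟨T, hiT, hTT₀⟩ := ((hsol.frequently_i_lt hu hγ hs₀ hi₀ hε).and_eventually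
    (eventually_ge_atTop T₀)).exists
  have hT : 0 ≤ T := hT₀.trans hTT₀
  have hsT : s T ≤ s T₀ := hsol.s_antitoneOn hu hβu.le hs₀ hi₀ hT₀ hT hTT₀
  rw [lt_div_iff₀ (by positivity)] at hiT
  obtain ⟨σ, hσ, hσS, hmax, hδ, hlevel⟩ := exists_final_level (γ := γ) hβ humax hβu
    (hsol.s_pos hu hs₀ hT) (hsol.i_pos hu hi₀ hT)
    (by nlinarith [mul_le_mul_of_nonneg_left (mul_le_mul_of_nonneg_left hsT hβu'.le) humax.le])
  exact hsol.exists_admissible_cost_lt_top_of_level hu hadm hT hβ hβu.le hσ hσS.le hmax hδ hlevel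

end SIRSol

theorem statement11_general (β γ umax iM l1 l2 : ℝ) (hβ : 0 < β) (hγ : 0 < γ)
    (humax : 0 < umax) (humaxβ : umax < β)
    (hl1 : 0 < l1) (hl2 : 0 ≤ l2)
    (s₀ i₀ : ℝ) (hB : (s₀, i₀) ∈ ViableSet β γ umax iM) (hi₀ : 0 < i₀)
    (u s i : ℝ → ℝ) (hu : IsControl umax u) (hsol : SIRSol β γ u s i s₀ i₀)
    (hopt : ∀ v sv iv : ℝ → ℝ, IsControl umax v → SIRSol β γ v sv iv s₀ i₀ →
      Admissible iM iv → Cost l1 l2 u i ≤ Cost l1 l2 v iv) :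
    ∃ sInf : ℝ, Filter.Tendsto s Filter.atTop (nhds sInf) ∧ sInf < γ / β := by
  obtain ⟨⟨hs₀, hs₀1, -⟩, u', s', i', hu', hsol', hadm'⟩ := hB
  obtain ⟨L, hL, hLs⟩ := hsol.exists_tendsto_s hu humaxβ.le hs₀ hi₀
  refine ⟨L, hL, lt_of_not_ge fun hherd => ?_⟩
  obtain ⟨v, sv, iv, hv, hsolv, hadmv, hcostv⟩ :=
    hsol'.exists_admissible_cost_lt_top hu' hadm' hβ hγ humax humaxβ hs₀ hi₀ l1 l2
  have hcost := (hopt v sv iv hv hsolv hadmv).trans_lt hcostv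
  exact hsol.not_integrableOn_control hu hβ hγ humaxβ.le hs₀ hs₀1 hi₀
    (fun t ht => hherd.trans (hLs t ht))
    (hu.integrableOn_of_cost_lt_top hl1 hl2 (fun t ht => (hsol.i_pos hu hi₀ ht.le).le) hcost)

/-- Along an optimal control for `P^∞_{λ₁,λ₂}`, herd immunity is reached:
`s^u_∞ < γ/β`. -/
theorem statement11 (β γ umax iM l1 l2 : ℝ) (hβ : 0 < β) (hγ : 0 < γ)
    (humax : 0 < umax) (humaxβ : umax < β) (hiM : iM ∈ Set.Ioo (0:ℝ) 1)
    (hl1 : 0 < l1) (hl2 : 0 ≤ l2)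
    (s₀ i₀ : ℝ) (hB : (s₀, i₀) ∈ ViableSet β γ umax iM) (hi₀ : 0 < i₀)
    (u s i : ℝ → ℝ) (hu : IsControl umax u) (hsol : SIRSol β γ u s i s₀ i₀)
    (hadm : Admissible iM i)
    (hopt : ∀ v sv iv : ℝ → ℝ, IsControl umax v → SIRSol β γ v sv iv s₀ i₀ →
      Admissible iM iv → Cost l1 l2 u i ≤ Cost l1 l2 v iv) :
    ∃ sInf : ℝ, Filter.Tendsto s Filter.atTop (nhds sInf) ∧ sInf < γ / β :=
  statement11_general β γ umax iM l1 l2 hβ hγ humax humaxβ hl1 hl2 s₀ i₀ hB hi₀ u s i hu hsol hopt
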